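/- arXiv:math/0508183 — 9 statements merged into one kernel-verified Lean document; each statement's English description precedes it below -/
import Mathlib

section
/- If σ is a Σ-proximity on a finite nonempty set A, then σ is symmetric: for all x, y ∈ A, σ(x,y) = σ(y,x). -/
open Finset

/-- A metric in the sense of the paper: `d x y = 0` iff `x = y`, and
the triangle inequality `d x y + d x z - d y z ≥ 0`. -/
def IsPaperMetric {A : Type*} (d : A → A → ℝ) : Prop :=
  (∀ x y, d x y = 0 ↔ x = y) ∧ (∀ x y z, 0 ≤ d x y + d x z - d y z)

/-- A Σ-proximity on a finite set: normalization and the (σ-)triangle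
inequality, strict when `z = y` and `x ≠ y`. -/
def IsSigmaProx {A : Type*} [Fintype A] (S : ℝ) (σ : A → A → ℝ) : Prop :=
  (∀ x, ∑ t, σ x t = S) ∧
  (∀ x y z, σ x y + σ x z - σ y z ≤ σ x x) ∧
  (∀ x y, x ≠ y → σ x y + σ x y - σ y y < σ x x)

/-- `d(x,·)`: the average distance from `x`. -/
noncomputable def dRow {A : Type*} [Fintype A] (d : A → A → ℝ) (x : A) : ℝ :=
  (∑ t, d x t) / (Fintype.card A : ℝ)

/-- `d(·,·)`: the overall average distance. -/
noncomputable def dAvg {A : Type*} [Fintype A] (d : A → A → ℝ) : ℝ :=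
  (∑ s, ∑ t, d s t) / (Fintype.card A : ℝ) ^ 2

/-- The transformation φ from metrics to Σ-proximities. -/
noncomputable def phi {A : Type*} [Fintype A] (S : ℝ) (d : A → A → ℝ) : A → A → ℝ :=
  fun x y => dRow d x + dRow d y - d x y - dAvg d + S / (Fintype.card A : ℝ)

/-- The transformation ψ from Σ-proximities to metrics. -/
noncomputable def psi {A : Type*} (σ : A → A → ℝ) : A → A → ℝ :=
  fun x y => (σ x x + σ y y) / 2 - σ x y

theorem sigmaProx_symm {A : Type*} [Fintype A] [Nonempty A] (S : ℝ)
    (σ : A → A → ℝ) (hσ : IsSigmaProx S σ) :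
    ∀ x y : A, σ x y = σ y x := by
  intro x y
  have h1 := hσ.2.1 x y x
  have h2 := hσ.2.1 y x y
  linarith
end

section
/- If σ is a Σ-proximity on a finite nonempty set A, then σ satisfies egocentrism: for all x, y ∈ A with x ≠ y, σ(x,x) > σ(x,y). -/
open Finset

theorem sigmaProx_egocentrism {A : Type*} [Fintype A] [Nonempty A] (S : ℝ)
    (σ : A → A → ℝ) (hσ : IsSigmaProx S σ) :
    ∀ x y : A, x ≠ y → σ x y < σ x x := by
  obtain ⟨hnorm, htri, hstrict⟩ := hσ
  intro x y hxy
  have hn : (0 : ℝ) < (Fintype.card A : ℝ) := by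
    exact_mod_cast Fintype.card_pos
  have hsum : ∑ z : A, (σ x y + σ x z - σ y z) < ∑ z : A, σ x x := by
    apply Finset.sum_lt_sum (fun z _ => htri x y z)
    exact ⟨y, Finset.mem_univ y, hstrict x y hxy⟩
  have h1 : ∑ z : A, (σ x y + σ x z - σ y z)
      = (Fintype.card A : ℝ) * σ x y := by
    rw [Finset.sum_sub_distrib, Finset.sum_add_distrib, hnorm x, hnorm y,
      Finset.sum_const, Finset.card_univ, nsmul_eq_mul]
    ring
  have h2 : ∑ z : A, σ x x = (Fintype.card A : ℝ) * σ x x := by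
    rw [Finset.sum_const, Finset.card_univ, nsmul_eq_mul]
  rw [h1, h2] at hsum
  exact lt_of_mul_lt_mul_left hsum hn.le
end

section
/- For any metric d on a finite nonempty set A with |A| = n and any real Σ, the function σ(x,y) = d(x,·) + d(y,·) − d(x,y) − d(·,·) + Σ/n is a Σ-proximity on A, where d(x,·) = (1/n)∑_{t∈A} d(x,t) and d(·,·) = (1/n²)∑_{s,t∈A} d(s,t). -/
open Finset

/-! The function `phi S d` differs from `-d` by a sum of a function of `x`, a function of `y` and
a constant. Such terms cancel in the σ-triangle defect `σ x x - (σ x y + σ x z - σ y z)`, which is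
therefore the metric triangle defect `d x y + d x z - d y z` (as `d x x = 0`), and the averages
`dRow` and `dAvg` are chosen exactly so that each row of `phi S d` sums to `S`. -/

namespace IsPaperMetric

variable {A : Type*} {d : A → A → ℝ}

theorem self_eq_zero (hd : IsPaperMetric d) (x : A) : d x x = 0 :=
  (hd.1 x x).mpr rfl

theorem pos_of_ne (hd : IsPaperMetric d) {x y : A} (hxy : x ≠ y) : 0 < d x y := by
  have hle : 0 ≤ d x y := by linarith [hd.2 x y y, hd.self_eq_zero y]
  exact hle.lt_of_ne fun h => hxy ((hd.1 x y).mp h.symm)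

end IsPaperMetric

section Averages

variable {A : Type*} [Fintype A] (d : A → A → ℝ)

theorem card_mul_dRow [Nonempty A] (x : A) :
    (Fintype.card A : ℝ) * dRow d x = ∑ t, d x t := by
  have hn : (Fintype.card A : ℝ) ≠ 0 := by positivity
  rw [dRow, mul_div_cancel₀ _ hn]

theorem sum_dRow : ∑ t, dRow d t = (Fintype.card A : ℝ) * dAvg d := by
  simp only [dAvg, dRow, ← Finset.sum_div]
  rcases eq_or_ne (Fintype.card A : ℝ) 0 with hn | hn
  · simp [hn]
  · field_simp

theorem sum_phi [Nonempty A] (S : ℝ) (x : A) : ∑ t, phi S d x t = S := by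
  have hn : (Fintype.card A : ℝ) ≠ 0 := by positivity
  simp only [phi, Finset.sum_add_distrib, Finset.sum_sub_distrib, Finset.sum_const,
    Finset.card_univ, nsmul_eq_mul, sum_dRow, ← card_mul_dRow d x]
  field_simp
  ring

end Averages

theorem phi_triangle_defect {A : Type*} [Fintype A] (S : ℝ) (d : A → A → ℝ) (x y z : A) :
    phi S d x x - (phi S d x y + phi S d x z - phi S d y z) = d x y + d x z - d y z - d x x := by
  simp only [phi]
  ring

theorem phi_isSigmaProx {A : Type*} [Fintype A] [Nonempty A] (S : ℝ)
    (d : A → A → ℝ) (hd : IsPaperMetric d) :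
    IsSigmaProx S (phi S d) := by
  refine ⟨sum_phi d S, fun x y z => ?_, fun x y hxy => ?_⟩
  · have h := phi_triangle_defect S d x y z
    linarith [hd.2 x y z, hd.self_eq_zero x]
  · have h := phi_triangle_defect S d x y y
    linarith [hd.pos_of_ne hxy, hd.self_eq_zero x, hd.self_eq_zero y]
end

section
/- For any Σ-proximity σ on a finite nonempty set A, the function d(x,y) = (σ(x,x) + σ(y,y))/2 − σ(x,y) is a metric on A. -/
open Finset

theorem psi_isPaperMetric {A : Type*} [Fintype A] [Nonempty A] (S : ℝ)
    (σ : A → A → ℝ) (hσ : IsSigmaProx S σ) :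
    IsPaperMetric (psi σ) := by
  obtain ⟨-, htri, hstrict⟩ := hσ
  constructor
  · intro x y
    constructor
    · intro h
      by_contra hne
      have := hstrict x y hne
      simp only [psi] at h
      linarith
    · rintro rfl; simp [psi]
  · intro x y z
    have := htri x y z
    simp only [psi]
    linarith
end

section
/- For any metric d on a finite nonempty set A, composing the transformation φ(d)(x,y) = d(x,·) + d(y,·) − d(x,y) − d(·,·) + Σ/n with ψ(σ)(x,y) = (σ(x,x) + σ(y,y))/2 − σ(x,y) recovers d, i.e., ψ(φ(d)) = d. -/
open Finset

theorem psi_phi_eq_id {A : Type*} [Fintype A] [Nonempty A] (S : ℝ)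
    (d : A → A → ℝ) (hd : IsPaperMetric d) :
    psi (phi S d) = d := by
  funext x y
  have hx : d x x = 0 := (hd.1 x x).mpr rfl
  have hy : d y y = 0 := (hd.1 y y).mpr rfl
  simp only [psi, phi, hx, hy]
  ring
end

section
/- For any Σ-proximity σ on a finite nonempty set A, composing ψ(σ)(x,y) = (σ(x,x) + σ(y,y))/2 − σ(x,y) with φ(d)(x,y) = d(x,·) + d(y,·) − d(x,y) − d(·,·) + Σ/n recovers σ, i.e., φ(ψ(σ)) = σ. -/
open Finset

theorem phi_psi_eq_id {A : Type*} [Fintype A] [Nonempty A] (S : ℝ)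
    (σ : A → A → ℝ) (hσ : IsSigmaProx S σ) :
    phi S (psi σ) = σ := by
  obtain ⟨h1, -, -⟩ := hσ
  have hn : (Fintype.card A : ℝ) ≠ 0 := by
    exact_mod_cast (Fintype.card_pos).ne'
  have hrow : ∀ x, ∑ t, psi σ x t =
      (Fintype.card A : ℝ) * σ x x / 2 + (∑ t, σ t t) / 2 - S := by
    intro x
    simp only [psi]
    rw [Finset.sum_sub_distrib, h1]
    rw [show (∑ t, (σ x x + σ t t) / 2) = ∑ t, (σ x x / 2 + σ t t / 2) by
      congr 1; funext t; ring]
    rw [Finset.sum_add_distrib, Finset.sum_const, ← Finset.sum_div]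
    simp
    ring
  have hsum : ∑ s, ∑ t, psi σ s t =
      (Fintype.card A : ℝ) * (∑ t, σ t t) - (Fintype.card A : ℝ) * S := by
    rw [Finset.sum_congr rfl (fun s _ => hrow s)]
    rw [Finset.sum_sub_distrib, Finset.sum_add_distrib, Finset.sum_const,
      ← Finset.sum_div, ← Finset.mul_sum]
    simp
    ring
  funext x y
  simp only [phi, dRow, dAvg]
  rw [hrow x, hrow y, hsum]
  simp only [psi]
  field_simp
  ring
end

section
/- If σ is a Σ_m-proximity on a set A with respect to a linear averaging functional μ, then σ is symmetric and satisfies weak egocentrism: σ(x,y) = σ(y,x) and σ(x,x) ≥ σ(x,y) for all x, y ∈ A. -/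
/-- A linear averaging functional `μ` defined on a set `B₁` of real functions:
`B₁` is a linear space containing the constants, `μ` is linear on `B₁`,
sends each constant function to its value, and is monotone. -/
structure IsLinAvg {A : Type*} (B1 : Set (A → ℝ)) (μ : (A → ℝ) → ℝ) : Prop where
  const_mem : ∀ c : ℝ, (fun _ : A => c) ∈ B1
  add_mem : ∀ f g, f ∈ B1 → g ∈ B1 → f + g ∈ B1
  smul_mem : ∀ (c : ℝ) f, f ∈ B1 → c • f ∈ B1
  map_add : ∀ f g, f ∈ B1 → g ∈ B1 → μ (f + g) = μ f + μ g
  map_smul : ∀ (c : ℝ) f, f ∈ B1 → μ (c • f) = c * μ f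
  map_const : ∀ c : ℝ, μ (fun _ : A => c) = c
  mono : ∀ f g, f ∈ B1 → g ∈ B1 → (∀ x, f x ≤ g x) → μ f ≤ μ g

/-- A family `B₂` of averagable functions of two variables on `A`
(with respect to `B₁` and the averaging functional `μ`). -/
structure IsAvgFamily {A : Type*} (B1 : Set (A → ℝ)) (μ : (A → ℝ) → ℝ)
    (B2 : Set (A → A → ℝ)) : Prop where
  const_mem : ∀ c : ℝ, (fun _ _ : A => c) ∈ B2
  add_mem : ∀ f g, f ∈ B2 → g ∈ B2 → (fun x y => f x y + g x y) ∈ B2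
  smul_mem : ∀ (c : ℝ) f, f ∈ B2 → (fun x y => c * f x y) ∈ B2
  lift_left : ∀ f ∈ B1, (fun x _ : A => f x) ∈ B2
  lift_right : ∀ f ∈ B1, (fun _ y : A => f y) ∈ B2
  sec_mem : ∀ f ∈ B2, ∀ x : A, (fun y => f x y) ∈ B1
  row_mem : ∀ f ∈ B2, (fun x => μ (fun y => f x y)) ∈ B1
  diag_mem : ∀ f ∈ B2, (fun x => f x x) ∈ B1

/-- A Σₘ-proximity on `A` with respect to `B₁`, `μ`, `B₂`. -/
def IsSigmaMProx {A : Type*} (B1 : Set (A → ℝ)) (μ : (A → ℝ) → ℝ)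
    (B2 : Set (A → A → ℝ)) (m : ℝ) (σ : A → A → ℝ) : Prop :=
  σ ∈ B2 ∧
  (∀ x, μ (fun y => σ x y) = m) ∧
  (∀ x y z, σ x y + σ x z - σ y z ≤ σ x x) ∧
  (∀ x y, x ≠ y → σ x y + σ x y - σ y y < σ x x)

theorem sigmaMProx_symm_egocentrism {A : Type*} [Nonempty A]
    (B1 : Set (A → ℝ)) (μ : (A → ℝ) → ℝ) (B2 : Set (A → A → ℝ))
    (hμ : IsLinAvg B1 μ) (hB2 : IsAvgFamily B1 μ B2) (m : ℝ)
    (σ : A → A → ℝ) (hσ : IsSigmaMProx B1 μ B2 m σ) :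
    ∀ x y : A, σ x y = σ y x ∧ σ x y ≤ σ x x := by
  obtain ⟨hmem, havg, htri, _⟩ := hσ
  intro x y
  have hsymm : ∀ a b : A, σ a b ≤ σ b a := by
    intro a b
    have := htri a b a
    linarith
  have hs : σ x y = σ y x := le_antisymm (hsymm x y) (hsymm y x)
  have hx1 : (fun z => σ x z) ∈ B1 := hB2.sec_mem σ hmem x
  have hy1 : (fun z => σ y z) ∈ B1 := hB2.sec_mem σ hmem y
  have hneg : ((-1 : ℝ) • fun z => σ y z) ∈ B1 := hμ.smul_mem _ _ hy1
  have hc : (fun _ : A => σ x y) ∈ B1 := hμ.const_mem _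
  have hsum1 : ((fun _ : A => σ x y) + fun z => σ x z) ∈ B1 := hμ.add_mem _ _ hc hx1
  have hsum2 : (((fun _ : A => σ x y) + fun z => σ x z) + (-1 : ℝ) • fun z => σ y z) ∈ B1 :=
    hμ.add_mem _ _ hsum1 hneg
  have hle : μ (((fun _ : A => σ x y) + fun z => σ x z) + (-1 : ℝ) • fun z => σ y z)
      ≤ μ (fun _ => σ x x) := by
    apply hμ.mono _ _ hsum2 (hμ.const_mem _)
    intro z
    have := htri x y z
    simp only [Pi.add_apply, Pi.smul_apply, smul_eq_mul]
    linarith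
  rw [hμ.map_add _ _ hsum1 hneg, hμ.map_add _ _ hc hx1, hμ.map_smul _ _ hy1,
    hμ.map_const, hμ.map_const, havg x, havg y] at hle
  exact ⟨hs, by linarith⟩
end

section
/- For any Σ_m-proximity σ on a set A (with respect to a linear averaging functional μ), the function d(x,y) = (σ(x,x) + σ(y,y))/2 − σ(x,y) is a metric on A: d(x,y) = 0 iff x = y, and d(x,y) + d(x,z) ≥ d(y,z) for all x,y,z. -/
theorem psi_sigmaMProx_isMetric {A : Type*} [Nonempty A]
    (B1 : Set (A → ℝ)) (μ : (A → ℝ) → ℝ) (B2 : Set (A → A → ℝ))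
    (hμ : IsLinAvg B1 μ) (hB2 : IsAvgFamily B1 μ B2) (m : ℝ)
    (σ : A → A → ℝ) (hσ : IsSigmaMProx B1 μ B2 m σ) :
    IsPaperMetric (fun x y => (σ x x + σ y y) / 2 - σ x y) := by
  obtain ⟨-, -, htri, hstrict⟩ := hσ
  constructor
  · intro x y
    constructor
    · intro h
      by_contra hne
      have := hstrict x y hne
      simp only at h
      linarith
    · rintro rfl; ring
  · intro x y z
    have := htri x y z
    simp only
    linarith
end

section
/- For any metric d in B₂, the function σ(x,y) = d(x,·) + d(y,·) − d(x,y) − d(·,·) + m is a Σ_m-proximity on A, where d(x,·) = μ_y(d(x,y)) and d(·,·) = μ(d(x,·)). -/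
theorem phi_metric_isSigmaMProx {A : Type*} [Nonempty A]
    (B1 : Set (A → ℝ)) (μ : (A → ℝ) → ℝ) (B2 : Set (A → A → ℝ))
    (hμ : IsLinAvg B1 μ) (hB2 : IsAvgFamily B1 μ B2) (m : ℝ)
    (d : A → A → ℝ) (hdB2 : d ∈ B2) (hd : IsPaperMetric d) :
    IsSigmaMProx B1 μ B2 m
      (fun x y => μ (fun t => d x t) + μ (fun t => d y t) - d x y
        - μ (fun s => μ (fun t => d s t)) + m) := by
  obtain ⟨hd0, hdtri⟩ := hd
  have hdxx : ∀ x, d x x = 0 := fun x => (hd0 x x).mpr rfl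
  have hdnn : ∀ x y, 0 ≤ d x y := by
    intro x y
    have h1 := hdtri x y y
    have h2 := hdxx y
    linarith
  have hD : (fun x => μ (fun t => d x t)) ∈ B1 := hB2.row_mem d hdB2
  refine ⟨?_, ?_, ?_, ?_⟩
  · -- membership in B2
    have h1 : (fun x _ : A => μ (fun t => d x t)) ∈ B2 := hB2.lift_left _ hD
    have h2 : (fun _ y : A => μ (fun t => d y t)) ∈ B2 := hB2.lift_right _ hD
    have h3 : (fun x y : A => (-1 : ℝ) * d x y) ∈ B2 := hB2.smul_mem (-1) d hdB2
    have h4 : (fun _ _ : A => - μ (fun s => μ (fun t => d s t)) + m) ∈ B2 :=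
      hB2.const_mem _
    have h5 := hB2.add_mem _ _ (hB2.add_mem _ _ (hB2.add_mem _ _ h1 h2) h3) h4
    have heq : (fun x y : A => μ (fun t => d x t) + μ (fun t => d y t) - d x y
        - μ (fun s => μ (fun t => d s t)) + m)
        = (fun x y : A =>
            (((fun x _ : A => μ (fun t => d x t)) x y
              + (fun _ y : A => μ (fun t => d y t)) x y)
              + (fun x y : A => (-1 : ℝ) * d x y) x y)
            + (fun _ _ : A => - μ (fun s => μ (fun t => d s t)) + m) x y) := by
      funext x y
      dsimp only
      ring
    rw [heq]
    exact h5
  · -- averaging condition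
    intro x
    have hg2 : (fun y => d x y) ∈ B1 := hB2.sec_mem d hdB2 x
    have hg2' : ((-1 : ℝ) • fun y => d x y) ∈ B1 := hμ.smul_mem _ _ hg2
    have hsum1 : ((fun y => μ (fun t => d y t)) + (-1 : ℝ) • fun y => d x y) ∈ B1 :=
      hμ.add_mem _ _ hD hg2'
    have hc : (fun _ : A => μ (fun t => d x t) - μ (fun s => μ (fun t => d s t)) + m) ∈ B1 :=
      hμ.const_mem _
    have heq : (fun y => μ (fun t => d x t) + μ (fun t => d y t) - d x y
        - μ (fun s => μ (fun t => d s t)) + m)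
        = (((fun y => μ (fun t => d y t)) + (-1 : ℝ) • fun y => d x y)
          + fun _ : A => μ (fun t => d x t) - μ (fun s => μ (fun t => d s t)) + m) := by
      funext y
      simp only [Pi.add_apply, Pi.smul_apply, smul_eq_mul]
      ring
    show μ (fun y => μ (fun t => d x t) + μ (fun t => d y t) - d x y
        - μ (fun s => μ (fun t => d s t)) + m) = m
    rw [heq, hμ.map_add _ _ hsum1 hc, hμ.map_add _ _ hD hg2',
      hμ.map_smul _ _ hg2, hμ.map_const]
    ring
  · intro x y z
    have h1 := hdtri x y z
    have h2 := hdxx x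
    dsimp only
    linarith
  · intro x y hxy
    have h1 : 0 < d x y :=
      lt_of_le_of_ne (hdnn x y) (fun h => hxy ((hd0 x y).mp h.symm))
    have h2 := hdxx x
    have h3 := hdxx y
    dsimp only
    linarith
end
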